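/- arXiv:1903.02445 — 3 statements merged into one kernel-verified Lean document; each statement's English description precedes it below -/
import Mathlib

section
/- Let G be an undirected graph and k ∈ ℕ. Let conf = (v_1,…,v_k) and conf' = (v_1',…,v_k') be two (G,k)-configurations. Then the pair (conf, conf') is a (k−1)-transition if and only if both of the following conditions hold: (1) for every 1 ≤ i ≤ k−1, the vertex v_i' does not belong to {v_1, v_2, …, v_i}; and (2) v_k' = v_1. -/
variable {V : Type*}

/-- A `(G,k)`-configuration: a tuple of `k` pairwise-distinct vertices of `G` in which
consecutive vertices are adjacent (0-indexed rendering of `(v_1, …, v_k)`). -/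
def IsConfig (G : SimpleGraph V) (k : ℕ) (c : Fin k → V) : Prop :=
  Function.Injective c ∧
    ∀ (i : ℕ) (h : i + 1 < k), G.Adj (c ⟨i, by omega⟩) (c ⟨i + 1, h⟩)

/-- A 1-transition between two `k`-tuples: the new head `v_1'` differs from
`v_1, …, v_{k-1}`, and `v_i' = v_{i-1}` for `2 ≤ i ≤ k`. -/
def OneTrans (k : ℕ) (c c' : Fin k → V) : Prop :=
  (∀ (i : ℕ) (h : i + 1 < k), c' ⟨0, by omega⟩ ≠ c ⟨i, by omega⟩) ∧
    ∀ (i : ℕ) (h : i + 1 < k), c' ⟨i + 1, h⟩ = c ⟨i, by omega⟩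

/-- An `ℓ`-transition: a sequence of `ℓ+1` `(G,k)`-configurations starting at `c`,
ending at `c'`, in which every consecutive pair is a 1-transition. -/
def IsTransition (G : SimpleGraph V) (k ℓ : ℕ) (c c' : Fin k → V) : Prop :=
  ∃ seq : Fin (ℓ + 1) → Fin k → V,
    seq 0 = c ∧ seq (Fin.last ℓ) = c' ∧
      (∀ i, IsConfig G k (seq i)) ∧
      ∀ (i : ℕ) (h : i + 1 < ℓ + 1), OneTrans k (seq ⟨i, by omega⟩) (seq ⟨i + 1, h⟩)

/-- `c` can reach `c'` if `(c, c')` is an `ℓ`-transition for some `ℓ`. -/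
def Reach (G : SimpleGraph V) (k : ℕ) (c c' : Fin k → V) : Prop :=
  ∃ ℓ : ℕ, IsTransition G k ℓ c c'

/-! Along a chain of 1-transitions each entry moves back one slot per step, so the entries of the
intermediate configurations agree along diagonals. After `k - 1` steps this identifies `c' (i - 1)`
with the head of the configuration at step `k - i`, which still contains `c (j - 1)` for `j ≤ i`;
injectivity of that configuration gives (1), and the diagonal through `c 0` gives (2).
Conversely, under (1) and (2) the length-`k` windows `slide c c' t` of the walk
`c (k - 1), …, c 0 = c' (k - 1), …, c' 0` form such a chain: (2) glues the two walks into one,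
and (1) is what makes every window injective. -/

section
variable {k : ℕ}

theorem OneTrans.of_injective_of_shift {c c' : Fin k → V} (hc' : Function.Injective c')
    (hshift : ∀ (i : ℕ) (h : i + 1 < k), c' ⟨i + 1, h⟩ = c ⟨i, by omega⟩) :
    OneTrans k c c' := by
  refine ⟨fun i h heq => ?_, hshift⟩
  rw [← hshift i h] at heq
  exact absurd (congrArg Fin.val (hc' heq)) (by simp)

theorem apply_eq_of_oneTrans_chain {ℓ : ℕ} (seq : Fin (ℓ + 1) → Fin k → V)
    (htrans : ∀ (i : ℕ) (h : i + 1 < ℓ + 1), OneTrans k (seq ⟨i, by omega⟩) (seq ⟨i + 1, h⟩))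
    {t t' : Fin (ℓ + 1)} {j j' : Fin k} (ht : t ≤ t') (h : (t : ℕ) + j' = t' + j) :
    seq t' j' = seq t j := by
  obtain ⟨d, hd⟩ := Nat.exists_eq_add_of_le (Fin.le_def.mp ht)
  induction d generalizing t' j' with
  | zero => congr <;> ext <;> omega
  | succ d ih =>
    calc seq t' j' = seq ⟨t + d + 1, by omega⟩ ⟨j' - 1 + 1, by omega⟩ := by
          congr <;> ext <;> simp only <;> omega
      _ = seq ⟨t + d, by omega⟩ ⟨j' - 1, by omega⟩ := (htrans (t + d) (by omega)).2 _ _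
      _ = seq t j := ih (Fin.le_def.mpr (by simp)) (by simp only; omega) rfl

/-- The configuration `t` steps into the slide from `c` to `c'`: the entries of `c` moved back
by `t` slots, behind `c' (k - 1 - t), …, c' (k - 2)`. -/
def slide (c c' : Fin k → V) (t : ℕ) (j : Fin k) : V :=
  if h : t ≤ j then c ⟨j - t, by omega⟩ else c' ⟨j + (k - 1) - t, by omega⟩

variable {c c' : Fin k → V}

theorem slide_of_le {t : ℕ} {j : Fin k} (h : t ≤ j) : slide c c' t j = c ⟨j - t, by omega⟩ :=
  dif_pos h

theorem slide_of_lt {t : ℕ} {j : Fin k} (h : (j : ℕ) < t) :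
    slide c c' t j = c' ⟨j + (k - 1) - t, by omega⟩ :=
  dif_neg (by omega)

theorem slide_zero : slide c c' 0 = c :=
  funext fun j => by rw [slide_of_le (Nat.zero_le _)]; rfl

theorem slide_sub_one (hk : 0 < k) (hjoin : c' ⟨k - 1, by omega⟩ = c ⟨0, hk⟩) :
    slide c c' (k - 1) = c' := by
  funext j
  rcases Nat.lt_or_ge (j : ℕ) (k - 1) with hj | hj
  · rw [slide_of_lt hj]
    congr; omega
  · rw [slide_of_le hj, show c ⟨j - (k - 1), _⟩ = c ⟨0, hk⟩ by congr; omega, ← hjoin]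
    congr; omega

theorem slide_succ_succ (t i : ℕ) (h : i + 1 < k) :
    slide c c' (t + 1) ⟨i + 1, h⟩ = slide c c' t ⟨i, by omega⟩ := by
  by_cases hti : t ≤ i
  · rw [slide_of_le (show t + 1 ≤ i + 1 by omega), slide_of_le (show t ≤ i by exact hti)]
    congr 2; simp only; omega
  · rw [slide_of_lt (show i + 1 < t + 1 by omega), slide_of_lt (show i < t by omega)]
    congr 2; simp only; omega

theorem slide_ne_slide {t : ℕ}
    (hsep : ∀ a b : Fin k, (b : ℕ) ≤ a → (a : ℕ) + 1 < k → c' a ≠ c b)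
    {x y : Fin k} (hx : t ≤ x) (hy : (y : ℕ) < t) : slide c c' t x ≠ slide c c' t y := by
  rw [slide_of_le hx, slide_of_lt hy]
  exact (hsep _ _ (by simp only; omega) (by simp only; omega)).symm

theorem slide_injective {t : ℕ} (ht : t ≤ k - 1) (hc : Function.Injective c)
    (hc' : Function.Injective c')
    (hsep : ∀ a b : Fin k, (b : ℕ) ≤ a → (a : ℕ) + 1 < k → c' a ≠ c b) :
    Function.Injective (slide c c' t) := by
  intro x y hxy
  rcases Nat.lt_or_ge (x : ℕ) t with hx | hx <;> rcases Nat.lt_or_ge (y : ℕ) t with hy | hy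
  · rw [slide_of_lt hx, slide_of_lt hy] at hxy
    have := congrArg Fin.val (hc' hxy)
    ext; simp only at this; omega
  · exact absurd hxy.symm (slide_ne_slide hsep hy hx)
  · exact absurd hxy (slide_ne_slide hsep hx hy)
  · rw [slide_of_le hx, slide_of_le hy] at hxy
    have := congrArg Fin.val (hc hxy)
    ext; simp only at this; omega

theorem slide_adj {G : SimpleGraph V} (hc : IsConfig G k c) (hc' : IsConfig G k c')
    (hk : 0 < k) (hjoin : c' ⟨k - 1, by omega⟩ = c ⟨0, hk⟩) {t : ℕ} (ht : t ≤ k - 1)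
    (i : ℕ) (h : i + 1 < k) : G.Adj (slide c c' t ⟨i, by omega⟩) (slide c c' t ⟨i + 1, h⟩) := by
  rcases Nat.lt_or_ge (i + 1) t with hi | hi
  · rw [slide_of_lt (show i < t by omega), slide_of_lt (show i + 1 < t by exact hi)]
    convert hc'.2 (i + (k - 1) - t) (by omega) using 3; simp only; omega
  rcases Nat.lt_or_ge i t with hi' | hi'
  · have hhead : c ⟨i + 1 - t, by omega⟩ = c' ⟨k - 1, by omega⟩ := by
      rw [hjoin]; congr; omega
    rw [slide_of_lt (show i < t by exact hi'), slide_of_le (show t ≤ i + 1 by exact hi)]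
    simp only [hhead]
    convert hc'.2 (k - 2) (by omega) using 3 <;> omega
  · rw [slide_of_le (show t ≤ i by exact hi'), slide_of_le (show t ≤ i + 1 by exact hi)]
    convert hc.2 (i - t) (by omega) using 3; simp only; omega

theorem isConfig_slide {G : SimpleGraph V} (hc : IsConfig G k c) (hc' : IsConfig G k c')
    (hk : 0 < k) (hjoin : c' ⟨k - 1, by omega⟩ = c ⟨0, hk⟩)
    (hsep : ∀ a b : Fin k, (b : ℕ) ≤ a → (a : ℕ) + 1 < k → c' a ≠ c b)
    {t : ℕ} (ht : t ≤ k - 1) : IsConfig G k (slide c c' t) :=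
  ⟨slide_injective ht hc.1 hc'.1 hsep, slide_adj hc hc' hk hjoin ht⟩

end

/-- Indices below are the paper's 1-indexed ones; `c ⟨i - 1, _⟩` is `v_i`. -/
theorem stmt1 (G : SimpleGraph V) (k : ℕ) (hk : 1 ≤ k)
    (c c' : Fin k → V) (hc : IsConfig G k c) (hc' : IsConfig G k c') :
    IsTransition G k (k - 1) c c' ↔
      ((∀ (i : ℕ) (_hi1 : 1 ≤ i) (_hi2 : i ≤ k - 1) (j : ℕ) (_hj1 : 1 ≤ j) (_hj2 : j ≤ i),
          c' ⟨i - 1, by omega⟩ ≠ c ⟨j - 1, by omega⟩) ∧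
        c' ⟨k - 1, by omega⟩ = c ⟨0, by omega⟩) := by
  constructor
  · rintro ⟨seq, rfl, rfl, hconf, htrans⟩
    refine ⟨fun i _ _ j _ _ heq => ?_, apply_eq_of_oneTrans_chain seq htrans (Fin.zero_le _) ?_⟩
    · have hhead : seq (Fin.last _) ⟨i - 1, by omega⟩ = seq ⟨k - i, by omega⟩ ⟨0, by omega⟩ :=
        apply_eq_of_oneTrans_chain seq htrans (Fin.le_last _) (by simp only [Fin.val_last]; omega)
      have hbody : seq 0 ⟨j - 1, by omega⟩ = seq ⟨k - i, by omega⟩ ⟨j - 1 + (k - i), by omega⟩ :=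
        (apply_eq_of_oneTrans_chain seq htrans (Fin.zero_le _)
          (by simp only [Fin.val_zero]; omega)).symm
      have := congrArg Fin.val ((hconf _).1 (hhead.symm.trans (heq.trans hbody)))
      simp only at this
      omega
    · simp only [Fin.val_zero, Fin.val_last]; omega
  · rintro ⟨hsep, hjoin⟩
    have hsep' : ∀ a b : Fin k, (b : ℕ) ≤ a → (a : ℕ) + 1 < k → c' a ≠ c b :=
      fun a b hba hak => hsep (a + 1) (by omega) (by omega) (b + 1) (by omega) (by omega)
    refine ⟨fun t => slide c c' t, ?_, slide_sub_one (by omega) hjoin,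
      fun t => isConfig_slide hc hc' (by omega) hjoin hsep' (by omega),
      fun i h => OneTrans.of_injective_of_shift (slide_injective (by omega) hc.1 hc'.1 hsep')
        (slide_succ_succ i)⟩
    simp only [Fin.val_zero, slide_zero]
end

section
/- Let G be an undirected graph and k, ℓ, r ∈ ℕ with ℓ ≤ k−1 and r ≤ k−1. Let conf = (v_1,…,v_k), conf' = (v_1',…,v_k'), conf'' = (v_1'',…,v_k'') be (G,k)-configurations such that (conf, conf') is an ℓ-transition and (conf', conf'') is an r-transition. Let W be the triplet order of (conf, conf', conf'') and let 𝒢 be a (V(G), 3k−2)-permuter. Then there exists a function f ∈ 𝒢 such that: (i) f maps W order-preservingly onto a set of consecutive integers {i, i+1, …, j} with 1 ≤ i ≤ j ≤ 3k−2 and j − i + 1 = |W|, where f(v_a') = 2k − a for every 1 ≤ a ≤ k; and (ii) all the vertices in W have pairwise distinct images under f. -/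
variable {V : Type*}

/-- An `(n,m,t)`-splitter: a family of functions `[n] → [t]` such that every subset
`W ⊆ [n]` of size at most `m` is mapped injectively by some member of the family. -/
def IsSplitter (n m t : ℕ) (F : Set (Fin n → Fin t)) : Prop :=
  ∀ W : Finset (Fin n), W.card ≤ m → ∃ f ∈ F, Set.InjOn f ↑W

/-- An `(S,t)`-permuter: a family `𝒢` of functions `S → [t]` (elements of `[t] = {1,…,t}`
are represented by `Fin t`, the value `x : Fin t` standing for `x + 1`) such that for every
ordered tuple `(w_1, …, w_m)` of distinct elements of `S` with `m ≤ t`, and all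
`1 ≤ i ≤ j ≤ t` with `j - i + 1 = m`, some `g ∈ 𝒢` maps the tuple order-preservingly onto
`{i, i+1, …, j}`, i.e. `g (w_s) = i + s - 1` for every `1 ≤ s ≤ m`. -/
def IsPermuter (S : Type*) (t : ℕ) (𝒢 : Set (S → Fin t)) : Prop :=
  ∀ (m : ℕ) (w : Fin m → S), Function.Injective w → m ≤ t →
    ∀ i j : ℕ, 1 ≤ i → i ≤ j → j ≤ t → j - i + 1 = m →
      ∃ g ∈ 𝒢, ∀ s : Fin m, (g (w s) : ℕ) + 1 = i + (s : ℕ)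

/-- The triplet order of `(conf, conf', conf'')`: starting from the ordered list
`(v_k, …, v_1, v_k', …, v_1', v_k'', …, v_1'')`, first remove the vertices of `conf`
and of `conf''` that occur in `conf'`, then remove the vertices of `conf` that occur
in `conf''`. -/
def tripletOrder [DecidableEq V] {k : ℕ} (c c' c'' : Fin k → V) : List V :=
  ((List.ofFn c).reverse.filter fun x =>
      decide (x ∉ List.ofFn c' ∧ x ∉ List.ofFn c'')) ++
    (List.ofFn c').reverse ++
    ((List.ofFn c'').reverse.filter fun x => decide (x ∉ List.ofFn c'))

lemma trans_shift {G : SimpleGraph V} {k ℓ : ℕ} {c c' : Fin k → V}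
    (h : IsTransition G k ℓ c c') (i : ℕ) (hi : i + ℓ < k) :
    c' ⟨i + ℓ, hi⟩ = c ⟨i, by omega⟩ := by
  obtain ⟨seq, h0, hlast, -, hstep⟩ := h
  suffices H : ∀ j (hj : j ≤ ℓ) i (hik : i + j < k),
      seq ⟨j, by omega⟩ ⟨i + j, hik⟩ = c ⟨i, by omega⟩ by
    have := H ℓ le_rfl i hi
    rwa [show (⟨ℓ, by omega⟩ : Fin (ℓ+1)) = Fin.last ℓ from rfl, hlast] at this
  intro j
  induction j with
  | zero => intro _ i hik; exact congrFun h0 ⟨i, by omega⟩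
  | succ j ih =>
    intro hj i hik
    have hs := (hstep j (by omega)).2 (i + j) (by omega)
    rw [show (⟨i + (j+1), hik⟩ : Fin k) = ⟨(i+j)+1, by omega⟩ from rfl, hs]
    exact ih (by omega) i (by omega)

lemma trans_inj {G : SimpleGraph V} {k ℓ : ℕ} {c c' : Fin k → V}
    (h : IsTransition G k ℓ c c') : Function.Injective c ∧ Function.Injective c' := by
  obtain ⟨seq, h0, hlast, hcfg, -⟩ := h
  exact ⟨h0 ▸ (hcfg 0).1, hlast ▸ (hcfg (Fin.last ℓ)).1⟩

lemma get_middle {α : Type*} (A B C : List α) (n : ℕ) (hn : n < B.length)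
    (h : A.length + n < (A ++ B ++ C).length) :
    (A ++ B ++ C)[A.length + n] = B[n] := by
  rw [List.getElem_append_left (by simp only [List.length_append]; omega),
    List.getElem_append_right (Nat.le_add_right _ _)]
  simp


/-- Lemma 3(i)–(ii) of the paper: if `(conf, conf')` is an
`ℓ`-transition and `(conf', conf'')` an `r`-transition with `ℓ, r ≤ k-1`, and `𝒢` is a
`(V(G), 3k-2)`-permuter, then some `f ∈ 𝒢` (i) maps the triplet order `W`
order-preservingly onto consecutive integers `{i, …, j} ⊆ [3k-2]` with `j - i + 1 = |W|`
and `f(v_a') = 2k - a` for every `1 ≤ a ≤ k` (written subtraction-free as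
`f(v_a') + a = 2k` with `Fin`-values shifted by one), and (ii) is injective on `W`. -/
theorem stmt7 [DecidableEq V] (G : SimpleGraph V) (k ℓ r : ℕ)
    (hk : 1 ≤ k) (hℓ1 : 1 ≤ ℓ) (hr1 : 1 ≤ r) (hℓk : ℓ ≤ k - 1) (hrk : r ≤ k - 1)
    (c c' c'' : Fin k → V)
    (h1 : IsTransition G k ℓ c c') (h2 : IsTransition G k r c' c'')
    (𝒢 : Set (V → Fin (3 * k - 2))) (h𝒢 : IsPermuter V (3 * k - 2) 𝒢) :
    ∃ f ∈ 𝒢,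
      (∃ i j : ℕ, 1 ≤ i ∧ i ≤ j ∧ j ≤ 3 * k - 2 ∧
          j - i + 1 = (tripletOrder c c' c'').length ∧
          (∀ s : Fin (tripletOrder c c' c'').length,
            (f ((tripletOrder c c' c'').get s) : ℕ) + 1 = i + (s : ℕ)) ∧
          ∀ (a : ℕ) (_ha1 : 1 ≤ a) (_ha2 : a ≤ k),
            (f (c' ⟨a - 1, by omega⟩) : ℕ) + 1 + a = 2 * k) ∧
        Set.InjOn f {x | x ∈ tripletOrder c c' c''} := by
  have hk2 : 2 ≤ k := by omega
  have hk0 : 0 < k := by omega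
  have h0r : 0 + r < k := by omega
  obtain ⟨hcinj, hc'inj⟩ := trans_inj h1
  obtain ⟨-, hc''inj⟩ := trans_inj h2
  have hshift1 : c' ⟨0 + ℓ, by omega⟩ = c ⟨0, by omega⟩ := trans_shift h1 0 (by omega)
  have hshift2 : c'' ⟨0 + r, by omega⟩ = c' ⟨0, by omega⟩ := trans_shift h2 0 (by omega)
  obtain ⟨A, hAdef⟩ : ∃ L, ((List.ofFn c).reverse.filter fun x =>
      decide (x ∉ List.ofFn c' ∧ x ∉ List.ofFn c'')) = L := ⟨_, rfl⟩
  obtain ⟨B, hBdef⟩ : ∃ L, (List.ofFn c').reverse = L := ⟨_, rfl⟩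
  obtain ⟨C, hCdef⟩ : ∃ L, ((List.ofFn c'').reverse.filter fun x =>
      decide (x ∉ List.ofFn c')) = L := ⟨_, rfl⟩
  have hW : tripletOrder c c' c'' = A ++ B ++ C := by
    rw [tripletOrder, hAdef, hBdef, hCdef]
  have hmemA : ∀ x, x ∈ A ↔ x ∈ List.ofFn c ∧ x ∉ List.ofFn c' ∧ x ∉ List.ofFn c'' := by
    intro x; rw [← hAdef]; simp [List.mem_filter]
  have hmemB : ∀ x, x ∈ B ↔ x ∈ List.ofFn c' := by
    intro x; rw [← hBdef]; simp
  have hmemC : ∀ x, x ∈ C ↔ x ∈ List.ofFn c'' ∧ x ∉ List.ofFn c' := by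
    intro x; rw [← hCdef]; simp [List.mem_filter]
  have hlenB : B.length = k := by rw [← hBdef]; simp
  have hc0mem : c ⟨0, by omega⟩ ∈ List.ofFn c' := by
    rw [← hshift1, List.mem_ofFn]; exact ⟨_, rfl⟩
  have hc'0mem : c'' ⟨0 + r, by omega⟩ ∈ List.ofFn c' := by
    rw [hshift2, List.mem_ofFn]; exact ⟨_, rfl⟩
  have hsubA : A.Sublist (List.ofFn c).reverse := hAdef ▸ List.filter_sublist
  have hsubC : C.Sublist (List.ofFn c'').reverse := hCdef ▸ List.filter_sublist
  have hlenA : A.length < k := by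
    rcases lt_or_eq_of_le (by simpa using hsubA.length_le) with h | h
    · exact h
    · exfalso
      have hEq : A = (List.ofFn c).reverse := hsubA.eq_of_length (by simpa using h)
      have hmem : c ⟨0, hk0⟩ ∈ A := by
        rw [hEq]; rw [List.mem_reverse]; rw [List.mem_ofFn]; exact ⟨_, rfl⟩
      exact ((hmemA _).1 hmem).2.1 hc0mem
  have hlenC : C.length < k := by
    rcases lt_or_eq_of_le (by simpa using hsubC.length_le) with h | h
    · exact h
    · exfalso
      have hEq : C = (List.ofFn c'').reverse := hsubC.eq_of_length (by simpa using h)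
      have hmem : c'' ⟨0 + r, h0r⟩ ∈ C := by
        rw [hEq]; rw [List.mem_reverse]; rw [List.mem_ofFn]; exact ⟨_, rfl⟩
      exact ((hmemC _).1 hmem).2 hc'0mem
  have hm : (tripletOrder c c' c'').length = A.length + k + C.length := by
    rw [hW]; simp [hlenB]; omega
  have hnd : (tripletOrder c c' c'').Nodup := by
    rw [hW, List.nodup_append, List.nodup_append]
    refine ⟨⟨hsubA.nodup ((List.nodup_reverse).2 (List.nodup_ofFn.2 hcinj)),
      hBdef ▸ (List.nodup_reverse).2 (List.nodup_ofFn.2 hc'inj), ?_⟩,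
      hsubC.nodup ((List.nodup_reverse).2 (List.nodup_ofFn.2 hc''inj)), ?_⟩
    · intro x hxA y hxB rfl
      exact ((hmemA _).1 hxA).2.1 ((hmemB _).1 hxB)
    · intro x hxAB y hxC rfl
      rcases List.mem_append.1 hxAB with h | h
      · exact ((hmemA _).1 h).2.2 ((hmemC _).1 hxC).1
      · exact ((hmemC _).1 hxC).2 ((hmemB _).1 h)
  have hinj : Function.Injective (tripletOrder c c' c'').get :=
    List.nodup_iff_injective_get.1 hnd
  obtain ⟨g, hg𝒢, hg⟩ := h𝒢 (tripletOrder c c' c'').length (tripletOrder c c' c'').get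
    hinj (by omega) (k - A.length)
    (k - A.length + ((tripletOrder c c' c'').length - 1)) (by omega) (by omega)
    (by omega) (by omega)
  refine ⟨g, hg𝒢, ⟨k - A.length, k - A.length + ((tripletOrder c c' c'').length - 1),
    by omega, by omega, by omega, by omega, hg, ?_⟩, ?_⟩
  · intro a ha1 ha2
    have hidx : A.length + (k - a) < (tripletOrder c c' c'').length := by omega
    have hidx2 : k - a < B.length := by omega
    have hgetW : (tripletOrder c c' c'').get ⟨A.length + (k - a), hidx⟩
        = c' ⟨a - 1, by omega⟩ := by
      rw [List.get_eq_getElem]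
      have e1 : (tripletOrder c c' c'')[A.length + (k - a)]'hidx
          = (A ++ B ++ C)[A.length + (k - a)]'(hW ▸ hidx) := getElem_congr_coll hW
      rw [e1, get_middle A B C (k - a) hidx2]
      have h3 : k - a < (List.ofFn c').reverse.length := by
        simp only [List.length_reverse, List.length_ofFn]; omega
      have e2 : ((List.ofFn c').reverse)[k - a]'h3 = B[k - a]'(hBdef ▸ h3) :=
        getElem_congr_coll hBdef
      rw [← e2]
      simp only [List.getElem_reverse, List.getElem_ofFn]
      exact congrArg c' (Fin.ext (by simp only [List.length_ofFn]; omega))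
    have hval := hg ⟨A.length + (k - a), hidx⟩
    rw [hgetW] at hval
    have hvred : ((⟨A.length + (k - a), hidx⟩ : Fin (tripletOrder c c' c'').length) : ℕ)
        = A.length + (k - a) := rfl
    rw [hvred] at hval
    omega
  · intro x hx y hy hxy
    simp only [Set.mem_setOf_eq] at hx hy
    obtain ⟨sx, hsx⟩ := List.get_of_mem hx
    obtain ⟨sy, hsy⟩ := List.get_of_mem hy
    have e1 := hg sx
    have e2 := hg sy
    rw [hsx] at e1
    rw [hsy] at e2
    have hgxy : (g x : ℕ) = (g y : ℕ) := by rw [hxy]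
    rw [← hsx, ← hsy]
    congr 1
    exact Fin.ext (by omega)
end

section
/- Let ⟨G, k, init, fin⟩ be an instance of Snake Game such that G contains, as a subgraph, a 3⌈√k⌉-wall H none of whose vertices appears in init or in fin, and let e = {u,v} ∈ E(H). If init can reach fin in the contracted graph G/e (i.e., ⟨G/e, k, init, fin⟩ is a Yes-instance), then init can reach fin in G (i.e., ⟨G, k, init, fin⟩ is a Yes-instance). -/
variable {V : Type*}

/-- Membership in the `r × 2r` grid `{1, …, r} × {1, …, 2r}`. -/
def InGrid (r : ℕ) (p : ℕ × ℕ) : Prop :=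
  1 ≤ p.1 ∧ p.1 ≤ r ∧ 1 ≤ p.2 ∧ p.2 ≤ 2 * r

/-- The `r × 2r` grid with the prescribed vertical edges already deleted: the deleted
vertical edges `{(2i-1, 2j-1), (2i, 2j-1)}` and `{(2i, 2j), (2i+1, 2j)}` are exactly
those `{(a, b), (a+1, b)}` with `a ≡ b (mod 2)`. -/
def PreWall (r : ℕ) : SimpleGraph (ℕ × ℕ) where
  Adj p q := InGrid r p ∧ InGrid r q ∧
    ((p.1 = q.1 ∧ (p.2 + 1 = q.2 ∨ q.2 + 1 = p.2)) ∨
      (p.2 = q.2 ∧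
        ((p.1 + 1 = q.1 ∧ ¬p.1 % 2 = p.2 % 2) ∨ (q.1 + 1 = p.1 ∧ ¬q.1 % 2 = q.2 % 2))))
  symm := by
    constructor
    intro p q h
    exact ⟨h.2.1, h.1, by omega⟩
  loopless := by
    constructor
    intro p h
    have := h.2.2
    omega

/-- `x` has degree exactly 1 in `H`. -/
def HasDegOne (H : SimpleGraph (ℕ × ℕ)) (x : ℕ × ℕ) : Prop :=
  ∃! y, H.Adj x y

/-- The elementary `r`-wall: the `r × 2r` grid minus the prescribed vertical edges, with
the resulting degree-1 vertices deleted. -/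
def ElemWall (r : ℕ) : SimpleGraph (ℕ × ℕ) where
  Adj p q := (PreWall r).Adj p q ∧ ¬HasDegOne (PreWall r) p ∧ ¬HasDegOne (PreWall r) q
  symm := by
    constructor
    intro p q h
    exact ⟨h.1.symm, h.2.2, h.2.1⟩
  loopless := by
    constructor
    intro p h
    exact (PreWall r).irrefl h.1

/-- `H'` is obtained from `H` by subdividing one edge `{u, v}` at a fresh vertex `w`. -/
def SubdivStep {W : Type*} (H H' : SimpleGraph W) : Prop :=
  ∃ u v w : W, H.Adj u v ∧ w ≠ u ∧ w ≠ v ∧ (∀ x, ¬H.Adj w x) ∧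
    ∀ a b, H'.Adj a b ↔
      ((H.Adj a b ∧ ¬(a = u ∧ b = v) ∧ ¬(a = v ∧ b = u)) ∨
        (a = u ∧ b = w) ∨ (a = w ∧ b = u) ∨ (a = v ∧ b = w) ∨ (a = w ∧ b = v))

/-- `H` is an `r`-wall: it is obtained from the elementary `r`-wall by a (possibly
empty) sequence of edge subdivisions. -/
def IsWall (r : ℕ) (H : SimpleGraph (ℕ × ℕ)) : Prop :=
  Relation.ReflTransGen SubdivStep (ElemWall r) H

/-- `⌈√n⌉` for natural `n`. -/
def csqrt (n : ℕ) : ℕ :=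
  if Nat.sqrt n * Nat.sqrt n = n then Nat.sqrt n else Nat.sqrt n + 1

/-- Contraction of the edge `{u, v}` of `H`, realized on the same vertex type: the
merged vertex `v_e` is (re)named `u`; it is adjacent to every vertex of
`N_H(u) ∪ N_H(v)` other than `u, v`, the vertex `v` becomes isolated, and all other
edges not incident to `u` or `v` are kept. -/
def ContractEdge {W : Type*} (H : SimpleGraph W) (u v : W) : SimpleGraph W where
  Adj a b := a ≠ b ∧
    ((a = u ∧ b ≠ v ∧ (H.Adj u b ∨ H.Adj v b)) ∨
      (b = u ∧ a ≠ v ∧ (H.Adj u a ∨ H.Adj v a)) ∨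
      (a ≠ u ∧ a ≠ v ∧ b ≠ u ∧ b ≠ v ∧ H.Adj a b))
  symm := by
    constructor
    intro a b h
    refine ⟨h.1.symm, ?_⟩
    tauto
  loopless := by
    constructor
    intro a h
    exact h.1 rfl



open Classical in
noncomputable def accL (d : ℕ → Prop) : ℕ → ℕ
  | 0 => 0
  | p+1 => accL d p + if d p then 2 else 1

open Classical in
noncomputable def invL (d : ℕ → Prop) (m : ℕ) : ℕ := Nat.findGreatest (fun p => accL d p ≤ m) m

lemma accL_succ_le (d : ℕ → Prop) (p : ℕ) :
    accL d p + 1 ≤ accL d (p+1) ∧ accL d (p+1) ≤ accL d p + 2 := by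
  classical
  simp only [accL]
  split <;> omega

lemma accL_of_not (d : ℕ → Prop) {p : ℕ} (h : ¬ d p) : accL d (p+1) = accL d p + 1 := by
  classical
  simp only [accL]
  rw [if_neg h]

lemma accL_of_dbl (d : ℕ → Prop) {p : ℕ} (h : d p) : accL d (p+1) = accL d p + 2 := by
  classical
  simp only [accL]
  rw [if_pos h]

lemma accL_add (d : ℕ → Prop) (p j : ℕ) : accL d p + j ≤ accL d (p + j) := by
  induction j with
  | zero => simp
  | succ j ih =>
      have h := accL_succ_le d (p + j)
      have h2 : p + (j + 1) = (p + j) + 1 := by omega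
      rw [h2]
      omega

lemma accL_zero (d : ℕ → Prop) : accL d 0 = 0 := rfl

lemma self_le_accL (d : ℕ → Prop) (p : ℕ) : p ≤ accL d p := by
  have := accL_add d 0 p
  rw [accL_zero] at this
  simpa using this

lemma accL_mono_lt (d : ℕ → Prop) {p q : ℕ} (h : p < q) : accL d p < accL d q := by
  have := accL_add d p (q - p)
  have h2 : p + (q - p) = q := by omega
  rw [h2] at this
  omega

lemma invL_eq (d : ℕ → Prop) {p m : ℕ} (h1 : accL d p ≤ m) (h2 : m < accL d (p+1)) :
    invL d m = p := by
  classical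
  have hpm : p ≤ m := le_trans (self_le_accL d p) h1
  have h3 : p ≤ invL d m := Nat.le_findGreatest hpm h1
  have h4 : accL d (invL d m) ≤ m := Nat.findGreatest_spec (P := fun p => accL d p ≤ m) (m := p) hpm h1
  by_contra hne
  have h5 : p + 1 ≤ invL d m := by omega
  have : accL d (p+1) ≤ accL d (invL d m) := by
    rcases Nat.eq_or_lt_of_le h5 with h|h
    · rw [h]
    · exact le_of_lt (accL_mono_lt d h)
  omega

lemma invL_bounds (d : ℕ → Prop) (m : ℕ) :
    accL d (invL d m) ≤ m ∧ m < accL d (invL d m + 1) := by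
  classical
  have h0 : accL d 0 ≤ m := by simp [accL]
  have h4 : accL d (invL d m) ≤ m := Nat.findGreatest_spec (P := fun p => accL d p ≤ m) (m := 0) (Nat.zero_le m) h0
  refine ⟨h4, ?_⟩
  by_contra hc
  push_neg at hc
  have hle : invL d m + 1 ≤ m := le_trans (self_le_accL d _) hc
  exact Nat.findGreatest_is_greatest (Nat.lt_succ_self _) hle hc


/-- A "snake walk": head trajectory encoding of a snake evolution. -/
def IsSnakeWalk (G : SimpleGraph V) (k n : ℕ) (w : ℕ → V) (init fin : Fin k → V) : Prop :=
  k - 1 ≤ n ∧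
  (∀ p, p + 1 ≤ n → G.Adj (w p) (w (p+1))) ∧
  (∀ p q, p < q → q ≤ p + (k-1) → q ≤ n → w p ≠ w q) ∧
  (∀ i : Fin k, w (k - 1 - (i : ℕ)) = init i) ∧
  (∀ i : Fin k, w (n - (i : ℕ)) = fin i)

def mkWalk {k ℓ : ℕ} (hk : 0 < k) (init : Fin k → V) (seq : Fin (ℓ+1) → Fin k → V) (p : ℕ) : V :=
  if p + 1 ≤ k then init ⟨k - 1 - p, by omega⟩
  else seq ⟨min (p - (k-1)) ℓ, Nat.lt_succ_of_le (min_le_right _ _)⟩ ⟨0, hk⟩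

lemma mkWalk_lo {k ℓ : ℕ} (hk : 0 < k) (init : Fin k → V) (seq : Fin (ℓ+1) → Fin k → V)
    {p : ℕ} (hp : p + 1 ≤ k) :
    mkWalk hk init seq p = init ⟨k - 1 - p, by omega⟩ := if_pos hp

lemma mkWalk_hi {k ℓ : ℕ} (hk : 0 < k) (init : Fin k → V) (seq : Fin (ℓ+1) → Fin k → V)
    {p : ℕ} (hp : ¬ (p + 1 ≤ k)) :
    mkWalk hk init seq p
      = seq ⟨min (p - (k-1)) ℓ, Nat.lt_succ_of_le (min_le_right _ _)⟩ ⟨0, hk⟩ := if_neg hp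

lemma walk_to_reach (G : SimpleGraph V) (k : ℕ) (hk : 2 ≤ k) (init fin : Fin k → V)
    (n : ℕ) (w : ℕ → V) (h : IsSnakeWalk G k n w init fin) : Reach G k init fin := by
  obtain ⟨hn, hadj, hwin, hini, hfin⟩ := h
  set ℓ := n - (k - 1) with hℓ
  have hnℓ : n = ℓ + (k - 1) := by omega
  refine ⟨ℓ, fun t i => w ((t : ℕ) + (k - 1 - (i : ℕ))), ?_, ?_, ?_, ?_⟩
  · funext i
    show w ((0 : Fin (ℓ+1)) + (k - 1 - (i : ℕ))) = init i
    simpa using hini i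
  · funext i
    show w ((Fin.last ℓ : Fin (ℓ+1)) + (k - 1 - (i : ℕ))) = fin i
    have hi : (i : ℕ) < k := i.isLt
    have e : (Fin.last ℓ : ℕ) + (k - 1 - (i : ℕ)) = n - (i : ℕ) := by
      simp only [Fin.val_last]; omega
    rw [e]; exact hfin i
  · intro t
    have ht : (t : ℕ) ≤ ℓ := Nat.lt_succ_iff.mp t.isLt
    constructor
    · intro i j hij
      by_contra hne
      have hi : (i : ℕ) < k := i.isLt
      have hj : (j : ℕ) < k := j.isLt
      have hvne : (i : ℕ) ≠ (j : ℕ) := fun hh => hne (Fin.ext hh)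
      rcases lt_trichotomy ((t : ℕ) + (k - 1 - (i : ℕ))) ((t : ℕ) + (k - 1 - (j : ℕ))) with hlt|heq|hgt
      · exact hwin _ _ hlt (by omega) (by omega) hij
      · omega
      · exact hwin _ _ hgt (by omega) (by omega) hij.symm
    · intro i hi
      show G.Adj (w ((t : ℕ) + (k - 1 - i))) (w ((t : ℕ) + (k - 1 - (i+1))))
      have e : (t : ℕ) + (k - 1 - i) = ((t : ℕ) + (k - 1 - (i+1))) + 1 := by omega
      rw [e]
      exact (hadj _ (by omega)).symm
  · intro t ht
    constructor
    · intro i hi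
      show w ((t+1) + (k - 1 - 0)) ≠ w ((t : ℕ) + (k - 1 - i))
      have ht' : t + 1 ≤ ℓ := Nat.lt_succ_iff.mp ht
      exact (hwin ((t : ℕ) + (k - 1 - i)) (t + 1 + (k - 1 - 0)) (by omega) (by omega) (by omega)).symm
    · intro i hi
      show w ((t+1) + (k - 1 - (i+1))) = w ((t : ℕ) + (k - 1 - i))
      congr 1
      omega

lemma reach_to_walk (G : SimpleGraph V) (k : ℕ) (hk : 2 ≤ k) (init fin : Fin k → V)
    (h : Reach G k init fin) : ∃ n w, IsSnakeWalk G k n w init fin := by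
  obtain ⟨ℓ, seq, h0, hl, hcfg, htr⟩ := h
  have hk0 : 0 < k := by omega
  set w : ℕ → V := mkWalk hk0 init seq with hw
  have key : ∀ t : ℕ, ∀ _ht : t ≤ ℓ, ∀ i : Fin k,
      seq ⟨t, by omega⟩ i = w (t + (k - 1 - (i : ℕ))) := by
    intro t
    induction t with
    | zero =>
      intro _ i
      have hi : (i : ℕ) < k := i.isLt
      have hp : (0 + (k - 1 - (i : ℕ))) + 1 ≤ k := by omega
      rw [hw, mkWalk_lo hk0 init seq hp]
      have e : (⟨k - 1 - (0 + (k - 1 - (i : ℕ))), by omega⟩ : Fin k) = i := Fin.ext (by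
        show k - 1 - (0 + (k - 1 - (i : ℕ))) = (i : ℕ)
        omega)
      rw [e]
      have h00 : (⟨0, by omega⟩ : Fin (ℓ+1)) = 0 := rfl
      rw [h00, h0]
    | succ t ih =>
      intro ht i
      obtain ⟨iv, hiv⟩ := i
      match iv, hiv with
      | 0, hiv =>
        have hp : ¬ ((t + 1 + (k - 1 - 0)) + 1 ≤ k) := by omega
        rw [hw, mkWalk_hi hk0 init seq hp]
        have e : (⟨min (t + 1 + (k - 1 - 0) - (k-1)) ℓ, Nat.lt_succ_of_le (min_le_right _ _)⟩ :
            Fin (ℓ+1)) = ⟨t + 1, by omega⟩ := Fin.ext (by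
          show min (t + 1 + (k - 1 - 0) - (k-1)) ℓ = t + 1
          omega)
        rw [e]
      | j+1, hiv =>
        have h2 := (htr t (by omega)).2 j hiv
        rw [h2, ih (by omega) ⟨j, by omega⟩]
        congr 1
        show t + (k - 1 - j) = t + 1 + (k - 1 - (j + 1))
        omega
  refine ⟨ℓ + (k - 1), w, by omega, ?_, ?_, ?_, ?_⟩
  · -- adjacency
    intro p hp
    set t := (p + 1) - (k - 1) with htdef
    have ht : t ≤ ℓ := by omega
    set i := t + (k - 1) - (p + 1) with hidef
    have hi1 : i + 1 < k := by omega
    have e1 : t + (k - 1 - i) = p + 1 := by omega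
    have e2 : t + (k - 1 - (i+1)) = p := by omega
    have a := (hcfg ⟨t, by omega⟩).2 i hi1
    rw [key t ht ⟨i, by omega⟩, key t ht ⟨i+1, hi1⟩] at a
    simp only [] at a
    rw [e1, e2] at a
    exact a.symm
  · -- windows
    intro p q hpq hqk hqn
    set t := q - (k - 1) with htdef
    have ht : t ≤ ℓ := by omega
    set ip := t + (k - 1) - p with hip
    set iq := t + (k - 1) - q with hiq
    have hipk : ip < k := by omega
    have hiqk : iq < k := by omega
    have e1 : t + (k - 1 - ip) = p := by omega
    have e2 : t + (k - 1 - iq) = q := by omega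
    intro heq
    have k1 := key t ht ⟨ip, hipk⟩
    have k2 := key t ht ⟨iq, hiqk⟩
    simp only [] at k1 k2
    rw [e1] at k1
    rw [e2] at k2
    have hseq : seq ⟨t, by omega⟩ ⟨ip, hipk⟩ = seq ⟨t, by omega⟩ ⟨iq, hiqk⟩ := by
      rw [k1, k2, heq]
    have h5 := (hcfg ⟨t, by omega⟩).1 hseq
    have h6 : ip = iq := congrArg Fin.val h5
    omega
  · -- init
    intro i
    have hkey := key 0 (Nat.zero_le _) i
    have h00 : (⟨0, by omega⟩ : Fin (ℓ+1)) = 0 := rfl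
    rw [h00, h0] at hkey
    simpa using hkey.symm
  · -- fin
    intro i
    have hkey := key ℓ le_rfl i
    have hll : (⟨ℓ, by omega⟩ : Fin (ℓ+1)) = Fin.last ℓ := rfl
    rw [hll, hl] at hkey
    have hi : (i : ℕ) < k := i.isLt
    have e : ℓ + (k - 1) - (i : ℕ) = ℓ + (k - 1 - (i : ℕ)) := by omega
    rw [e]
    exact hkey.symm

section Contract
variable {V : Type*}

open Classical in
/-- Does position `p` of the walk need a double block? -/
noncomputable def cdbl (G : SimpleGraph V) (U : V) (w : ℕ → V) (p : ℕ) : Prop :=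
  w p = U ∧ ¬(G.Adj U (w (p-1)) ↔ G.Adj U (w (p+1)))

open Classical in
noncomputable def csV (G : SimpleGraph V) (U Vb : V) (w : ℕ → V) (p : ℕ) : V :=
  if w p = U then (if G.Adj U (w (p-1)) then U else Vb) else w p

open Classical in
noncomputable def ceV (G : SimpleGraph V) (U Vb : V) (w : ℕ → V) (p : ℕ) : V :=
  if w p = U then (if G.Adj U (w (p+1)) then U else Vb) else w p

open Classical in
noncomputable def cW (G : SimpleGraph V) (U Vb : V) (w : ℕ → V) (m : ℕ) : V :=
  if accL (cdbl G U w) (invL (cdbl G U w) m) = m then csV G U Vb w (invL (cdbl G U w) m)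
  else ceV G U Vb w (invL (cdbl G U w) m)

lemma cW_start (G : SimpleGraph V) (U Vb : V) (w : ℕ → V) (p : ℕ) :
    cW G U Vb w (accL (cdbl G U w) p) = csV G U Vb w p := by
  classical
  have h1 := accL_succ_le (cdbl G U w) p
  have h2 : invL (cdbl G U w) (accL (cdbl G U w) p) = p :=
    invL_eq _ le_rfl (by omega)
  unfold cW
  rw [h2, if_pos rfl]

lemma cW_end (G : SimpleGraph V) (U Vb : V) (w : ℕ → V) {p : ℕ} (h : cdbl G U w p) :
    cW G U Vb w (accL (cdbl G U w) p + 1) = ceV G U Vb w p := by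
  classical
  have h1 := accL_of_dbl (cdbl G U w) h
  have h2 : invL (cdbl G U w) (accL (cdbl G U w) p + 1) = p :=
    invL_eq _ (by omega) (by omega)
  unfold cW
  rw [h2, if_neg (by omega)]

lemma cW_mid (G : SimpleGraph V) (U Vb : V) (w : ℕ → V) {p m : ℕ}
    (h1 : accL (cdbl G U w) p ≤ m) (h2 : m < accL (cdbl G U w) (p+1)) :
    cW G U Vb w m = csV G U Vb w p ∨ cW G U Vb w m = ceV G U Vb w p := by
  classical
  have h3 : invL (cdbl G U w) m = p := invL_eq _ h1 h2
  unfold cW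
  rw [h3]
  split
  · exact Or.inl rfl
  · exact Or.inr rfl

lemma walk_contract (G : SimpleGraph V) (U Vb : V) (hUV : G.Adj U Vb)
    (k n : ℕ) (hk : 2 ≤ k) (w : ℕ → V) (init fin : Fin k → V)
    (hiU : ∀ i : Fin k, init i ≠ U) (hfU : ∀ i : Fin k, fin i ≠ U)
    (h : IsSnakeWalk (ContractEdge G U Vb) k n w init fin) :
    ∃ n' w', IsSnakeWalk G k n' w' init fin := by
  classical
  obtain ⟨hn, hadj, hwin, hini, hfin⟩ := h
  have hne : U ≠ Vb := hUV.ne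
  -- Vb never occurs in the walk
  have hnoVb : ∀ x : V, ¬ (ContractEdge G U Vb).Adj Vb x := by
    intro x hx
    obtain ⟨h1, h2⟩ := hx
    rcases h2 with ⟨ha, _, _⟩|⟨_, hb, _⟩|⟨_, ha, _, _, _⟩
    · exact hne ha.symm
    · exact hb rfl
    · exact ha rfl
  have hVb : ∀ p, p ≤ n → w p ≠ Vb := by
    intro p hp hcon
    rcases Nat.lt_or_ge p n with h1|h1
    · have := hadj p (by omega)
      rw [hcon] at this
      exact hnoVb _ this
    · have hpn : p = n := by omega
      subst hpn
      have hn1 : 1 ≤ p := by omega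
      have h2 := hadj (p-1) (by omega)
      have e : p - 1 + 1 = p := by omega
      rw [e, hcon] at h2
      exact hnoVb _ h2.symm
  -- values at the two ends of the walk
  have hival : ∀ p, ∀ _hp : p ≤ k - 1, w p = init ⟨k - 1 - p, by omega⟩ := by
    intro p hp
    have h2 := hini ⟨k - 1 - p, by omega⟩
    simp only [] at h2
    have e : k - 1 - (k - 1 - p) = p := by omega
    rw [e] at h2
    exact h2
  have hfval : ∀ p, ∀ _hp1 : n - (k - 1) ≤ p, ∀ _hp2 : p ≤ n, w p = fin ⟨n - p, by omega⟩ := by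
    intro p hp1 hp2
    have h2 := hfin ⟨n - p, by omega⟩
    simp only [] at h2
    have e : n - (n - p) = p := by omega
    rw [e] at h2
    exact h2
  -- U occurs only in the middle
  have hUmid : ∀ p, p ≤ n → w p = U → k - 1 < p ∧ p < n - (k - 1) := by
    intro p hp hU
    constructor
    · by_contra hc
      push_neg at hc
      exact hiU _ ((hival p hc) ▸ hU)
    · by_contra hc
      push_neg at hc
      exact hfU _ ((hfval p hc hp) ▸ hU)
  have hUini : ∀ p, p ≤ k - 1 → w p ≠ U := by
    intro p hp hc
    have := hUmid p (by omega) hc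
    omega
  have hUfin : ∀ p, n - (k - 1) ≤ p → p ≤ n → w p ≠ U := by
    intro p hp1 hp2 hc
    have := hUmid p hp2 hc
    omega
  have hstep : ∀ p, w p ≠ U → accL (cdbl G U w) (p+1) = accL (cdbl G U w) p + 1 := by
    intro p hp
    exact accL_of_not _ (fun hdp => hp hdp.1)
  -- correspondence: values of cW over block p
  have hcorr : ∀ p m, accL (cdbl G U w) p ≤ m → m < accL (cdbl G U w) (p+1) →
      (w p ≠ U ∧ cW G U Vb w m = w p) ∨ (w p = U ∧ (cW G U Vb w m = U ∨ cW G U Vb w m = Vb)) := by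
    intro p m h1 h2
    have hmid := cW_mid G U Vb w h1 h2
    by_cases hU : w p = U
    · refine Or.inr ⟨hU, ?_⟩
      rcases hmid with h3|h3
      · rw [h3]; unfold csV; rw [if_pos hU]
        split
        · exact Or.inl rfl
        · exact Or.inr rfl
      · rw [h3]; unfold ceV; rw [if_pos hU]
        split
        · exact Or.inl rfl
        · exact Or.inr rfl
    · refine Or.inl ⟨hU, ?_⟩
      rcases hmid with h3|h3
      · rw [h3]; unfold csV; rw [if_neg hU]
      · rw [h3]; unfold ceV; rw [if_neg hU]
  -- adjacency across consecutive blocks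
  have hcross : ∀ p, p + 1 ≤ n → G.Adj (ceV G U Vb w p) (csV G U Vb w (p+1)) := by
    intro p hp
    obtain ⟨hab, hcase⟩ := hadj p hp
    have hwp1 : w (p+1) ≠ Vb := hVb (p+1) hp
    have hwp : w p ≠ Vb := hVb p (by omega)
    by_cases h1 : w p = U
    · have h2 : w (p+1) ≠ U := by
        intro hc
        rw [h1, hc] at hab
        exact hab rfl
      have hor : G.Adj U (w (p+1)) ∨ G.Adj Vb (w (p+1)) := by
        rcases hcase with ⟨_, _, hc⟩|⟨hb, _, _⟩|⟨ha, _, _, _, _⟩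
        · exact hc
        · exact absurd hb h2
        · exact absurd h1 ha
      unfold ceV csV
      rw [if_pos h1, if_neg h2]
      by_cases hout : G.Adj U (w (p+1))
      · rw [if_pos hout]; exact hout
      · rw [if_neg hout]; exact hor.resolve_left hout
    · by_cases h2 : w (p+1) = U
      · have hor : G.Adj U (w p) ∨ G.Adj Vb (w p) := by
          rcases hcase with ⟨ha, _, _⟩|⟨_, _, hc⟩|⟨_, _, hb, _, _⟩
          · exact absurd ha h1
          · exact hc
          · exact absurd h2 hb
        unfold ceV csV
        rw [if_neg h1, if_pos h2]
        have e : p + 1 - 1 = p := by omega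
        rw [e]
        by_cases hin : G.Adj U (w p)
        · rw [if_pos hin]; exact hin.symm
        · rw [if_neg hin]; exact (hor.resolve_left hin).symm
      · have hG : G.Adj (w p) (w (p+1)) := by
          rcases hcase with ⟨ha, _, _⟩|⟨hb, _, _⟩|⟨_, _, _, _, hc⟩
          · exact absurd ha h1
          · exact absurd hb h2
          · exact hc
        unfold ceV csV
        rw [if_neg h1, if_neg h2]
        exact hG
  -- adjacency within a double block
  have hdblblk : ∀ p, cdbl G U w p → G.Adj (csV G U Vb w p) (ceV G U Vb w p) := by
    intro p hdp
    obtain ⟨hU, hio⟩ := hdp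
    unfold csV ceV
    rw [if_pos hU, if_pos hU]
    by_cases hin : G.Adj U (w (p-1))
    · rw [if_pos hin, if_neg (fun ho => hio ⟨fun _ => ho, fun _ => hin⟩)]
      exact hUV
    · rw [if_neg hin, if_pos (by
        by_contra ho
        exact hio ⟨fun hi' => absurd hi' hin, fun ho' => absurd ho' ho⟩)]
      exact hUV.symm
  refine ⟨accL (cdbl G U w) n, cW G U Vb w, ?_, ?_, ?_, ?_, ?_⟩
  · have := self_le_accL (cdbl G U w) n
    omega
  · -- adjacency
    intro m hm
    obtain ⟨hb1, hb2⟩ := invL_bounds (cdbl G U w) m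
    have hpn : invL (cdbl G U w) m < n := by
      by_contra hc
      push_neg at hc
      have h4 : accL (cdbl G U w) n ≤ accL (cdbl G U w) (invL (cdbl G U w) m) := by
        rcases Nat.eq_or_lt_of_le hc with h5|h5
        · rw [h5]
        · exact le_of_lt (accL_mono_lt _ h5)
      omega
    set p := invL (cdbl G U w) m with hpdef
    rcases Nat.lt_or_ge (m+1) (accL (cdbl G U w) (p+1)) with hcase|hcase
    · -- inside a double block
      have hsl := accL_succ_le (cdbl G U w) p
      have hm1 : m = accL (cdbl G U w) p := by omega
      have hdp : cdbl G U w p := by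
        by_contra hdc
        have := accL_of_not _ hdc
        omega
      rw [hm1, cW_start G U Vb w p, cW_end G U Vb w hdp]
      exact hdblblk p hdp
    · -- across blocks
      have hm1 : accL (cdbl G U w) (p+1) = m + 1 := by omega
      have hv2 : cW G U Vb w (m+1) = csV G U Vb w (p+1) := by
        rw [← hm1]; exact cW_start G U Vb w (p+1)
      have hv1 : cW G U Vb w m = ceV G U Vb w p := by
        by_cases hdp : cdbl G U w p
        · have := accL_of_dbl _ hdp
          have hm0 : m = accL (cdbl G U w) p + 1 := by omega
          rw [hm0]
          exact cW_end G U Vb w hdp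
        · have := accL_of_not _ hdp
          have hm0 : m = accL (cdbl G U w) p := by omega
          rw [hm0, cW_start G U Vb w p]
          unfold csV ceV
          by_cases hU : w p = U
          · rw [if_pos hU, if_pos hU]
            have hio : G.Adj U (w (p-1)) ↔ G.Adj U (w (p+1)) := by
              by_contra hc
              exact hdp ⟨hU, hc⟩
            by_cases hin : G.Adj U (w (p-1))
            · rw [if_pos hin, if_pos (hio.mp hin)]
            · rw [if_neg hin, if_neg (fun ho => hin (hio.mpr ho))]
          · rw [if_neg hU, if_neg hU]
      rw [hv1, hv2]
      exact hcross p hpn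
  · -- windows
    intro m1 m2 hlt hwidth hub
    obtain ⟨hc1, hc2⟩ := invL_bounds (cdbl G U w) m1
    obtain ⟨hc3, hc4⟩ := invL_bounds (cdbl G U w) m2
    set p1 := invL (cdbl G U w) m1 with hp1def
    set p2 := invL (cdbl G U w) m2 with hp2def
    have hp2n : p2 ≤ n := by
      by_contra hc
      push_neg at hc
      have : accL (cdbl G U w) n < accL (cdbl G U w) p2 := accL_mono_lt _ hc
      omega
    have hple : p1 ≤ p2 := by
      by_contra hc
      push_neg at hc
      have h7 : p2 + 1 ≤ p1 := hc
      have h6 : accL (cdbl G U w) (p2 + 1) ≤ accL (cdbl G U w) p1 := by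
        rcases Nat.eq_or_lt_of_le h7 with h5|h5
        · exact le_of_eq (congrArg _ h5)
        · exact le_of_lt (accL_mono_lt _ h5)
      omega
    rcases Nat.eq_or_lt_of_le hple with heq|hplt
    · -- same block: double block, its two endpoints
      have hsl := accL_succ_le (cdbl G U w) p1
      rw [← heq] at hc3 hc4
      have hdp : cdbl G U w p1 := by
        by_contra hdc
        have := accL_of_not _ hdc
        omega
      have hm1 : m1 = accL (cdbl G U w) p1 := by omega
      have hm2 : m2 = accL (cdbl G U w) p1 + 1 := by omega
      rw [hm1, hm2, cW_start G U Vb w p1, cW_end G U Vb w hdp]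
      exact (hdblblk p1 hdp).ne
    · -- different blocks
      have hgap : p2 ≤ p1 + (k - 1) := by
        have h5 := accL_add (cdbl G U w) (p1 + 1) (p2 - (p1 + 1))
        have e : p1 + 1 + (p2 - (p1+1)) = p2 := by omega
        rw [e] at h5
        have h6 := accL_succ_le (cdbl G U w) p1
        omega
      have hwne : w p1 ≠ w p2 := hwin p1 p2 hplt hgap hp2n
      have hco1 := hcorr p1 m1 hc1 hc2
      have hco2 := hcorr p2 m2 hc3 hc4
      have hVb1 : w p1 ≠ Vb := hVb p1 (by omega)
      have hVb2 : w p2 ≠ Vb := hVb p2 hp2n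
      rcases hco1 with ⟨hU1, hv1⟩|⟨hU1, hv1⟩ <;> rcases hco2 with ⟨hU2, hv2⟩|⟨hU2, hv2⟩
      · rw [hv1, hv2]; exact hwne
      · rw [hv1]
        rcases hv2 with h3|h3 <;> rw [h3]
        · rw [← hU2]; exact hwne
        · exact hVb1
      · rw [hv2]
        rcases hv1 with h3|h3 <;> rw [h3]
        · rw [← hU1]; exact hwne
        · exact fun hc => hVb2 hc.symm
      · exact absurd (hU1.trans hU2.symm) hwne
  · -- init
    intro i
    have hfj : ∀ j, j ≤ k - 1 → accL (cdbl G U w) j = j := by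
      intro j hj
      induction j with
      | zero => exact accL_zero _
      | succ j ih =>
        rw [hstep j (hUini j (by omega)), ih (by omega)]
    have hvj : ∀ j, j ≤ k - 1 → cW G U Vb w j = w j := by
      intro j hj
      have h1 : accL (cdbl G U w) j = j := hfj j hj
      have h2 : accL (cdbl G U w) (j + 1) = j + 1 := by
        rw [hstep j (hUini j hj), h1]
      have h3 := hcorr j j (by omega) (by omega)
      rcases h3 with ⟨_, hv⟩|⟨hU, _⟩
      · exact hv
      · exact absurd hU (hUini j hj)
    have hi : (i : ℕ) < k := i.isLt
    rw [hvj (k - 1 - (i : ℕ)) (by omega)]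
    exact hini i
  · -- fin
    intro i
    have hstepf : ∀ j, j ≤ k - 1 → accL (cdbl G U w) (n - j) + j = accL (cdbl G U w) n := by
      intro j hj
      induction j with
      | zero => simp
      | succ j ih =>
        have e : n - (j+1) + 1 = n - j := by omega
        have h1 : w (n - (j+1)) ≠ U := hUfin (n - (j+1)) (by omega) (by omega)
        have h2 := hstep (n - (j+1)) h1
        rw [e] at h2
        have := ih (by omega)
        omega
    have hi : (i : ℕ) < k := i.isLt
    have h1 : accL (cdbl G U w) (n - (i : ℕ)) = accL (cdbl G U w) n - (i : ℕ) := by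
      have := hstepf (i : ℕ) (by omega)
      omega
    have h3 : csV G U Vb w (n - (i : ℕ)) = w (n - (i : ℕ)) := by
      unfold csV
      rw [if_neg (hUfin (n - (i : ℕ)) (by omega) (by omega))]
    rw [← h1, cW_start G U Vb w _, h3]
    exact hfin i
end Contract

/-- Lemma 11 of the paper: let `⟨G, k, init, fin⟩` be a Snake Game
instance and let `H` be a `3⌈√k⌉`-wall contained in `G` as a subgraph (via the embedding
`φ`, injective on the support of `H` and preserving adjacency) none of whose vertices
appears in `init` or `fin`, and let `e = {u, v} ∈ E(H)`. If `init` can reach `fin` in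
`G/e` (the contraction of the edge `{φ u, φ v}` of `G`), then `init` can reach `fin`
in `G`. -/
theorem stmt18 (G : SimpleGraph V) (k : ℕ) (hk : 1 ≤ k)
    (init fin : Fin k → V) (hinit : IsConfig G k init) (hfin : IsConfig G k fin)
    (H : SimpleGraph (ℕ × ℕ)) (hH : IsWall (3 * csqrt k) H)
    (φ : ℕ × ℕ → V) (hφ : Set.InjOn φ H.support)
    (hadj : ∀ a b : ℕ × ℕ, H.Adj a b → G.Adj (φ a) (φ b))
    (havoid : ∀ x ∈ H.support, (∀ i : Fin k, φ x ≠ init i) ∧ ∀ i : Fin k, φ x ≠ fin i)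
    (u v : ℕ × ℕ) (he : H.Adj u v)
    (hreach : Reach (ContractEdge G (φ u) (φ v)) k init fin) :
    Reach G k init fin := by
  by_cases hk2 : 2 ≤ k
  · have hu : u ∈ H.support := ⟨v, he⟩
    have hv' : v ∈ H.support := ⟨u, he.symm⟩
    have hUV : G.Adj (φ u) (φ v) := hadj u v he
    have hiU : ∀ i : Fin k, init i ≠ φ u := fun i => ((havoid u hu).1 i).symm
    have hfU : ∀ i : Fin k, fin i ≠ φ u := fun i => ((havoid u hu).2 i).symm
    obtain ⟨n, w, hw⟩ := reach_to_walk _ k hk2 init fin hreach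
    obtain ⟨n', w', hw'⟩ := walk_contract G (φ u) (φ v) hUV k n hk2 w init fin hiU hfU hw
    exact walk_to_reach G k hk2 init fin n' w' hw'
  · have hk1 : k = 1 := by omega
    subst hk1
    refine ⟨1, fun t => if t = 0 then init else fin, ?_, ?_, ?_, ?_⟩
    · simp
    · have h2 : (Fin.last 1 : Fin 2) ≠ 0 := by decide
      simp [h2]
    · intro t
      refine ⟨fun a b _ => Subsingleton.elim a b, fun i hi => absurd hi (by omega)⟩
    · intro t ht
      exact ⟨fun i hi => absurd hi (by omega), fun i hi => absurd hi (by omega)⟩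
end
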